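/- For every s ∈ ℝ there exists a constant C > 0 (depending only on s) such that for all μ with 0 < μ ≤ 1, all β ≥ 0 and all ξ ∈ ℝ, one has √(K_μ(ξ))·⟨ξ⟩^{s−1}·|ξ| ≤ C·( (1 + √β + β)·⟨ξ⟩^{s} + √β·μ^{1/4}·⟨ξ⟩^{s}·|ξ|^{1/2} ). -/

import Mathlib

/-- The symbol `T_μ(ξ) = tanh(√μ |ξ|)/(√μ |ξ|)`, with value `1` at `ξ = 0`. -/
noncomputable def Tmu (μ ξ : ℝ) : ℝ :=
  if ξ = 0 then 1 else Real.tanh (Real.sqrt μ * |ξ|) / (Real.sqrt μ * |ξ|)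

/-- The full-dispersion symbol `K_μ(ξ) = T_μ(ξ)·(1 + β μ ξ²)`. -/
noncomputable def Kmu (β μ ξ : ℝ) : ℝ := Tmu μ ξ * (1 + β * μ * ξ ^ 2)

lemma tanh_nonneg' {x : ℝ} (hx : 0 ≤ x) : 0 ≤ Real.tanh x := by
  rw [Real.tanh_eq_sinh_div_cosh]
  exact div_nonneg (Real.sinh_nonneg_iff.2 hx) (Real.cosh_pos x).le

lemma tanh_le_one' (x : ℝ) : Real.tanh x ≤ 1 := by
  rw [Real.tanh_eq_sinh_div_cosh]
  exact (div_le_one (Real.cosh_pos x)).2 (le_of_lt (Real.sinh_lt_cosh x))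

lemma sinh_le_mul_cosh {x : ℝ} (hx : 0 ≤ x) : Real.sinh x ≤ x * Real.cosh x := by
  set f : ℝ → ℝ := fun y => y * Real.cosh y - Real.sinh y with hf
  have hd : ∀ y : ℝ, HasDerivAt f (y * Real.sinh y) y := by
    intro y
    have h1 : HasDerivAt (fun x : ℝ => x * Real.cosh x)
        (1 * Real.cosh y + y * Real.sinh y) y :=
      (hasDerivAt_id y).mul (Real.hasDerivAt_cosh y)
    have h2 := Real.hasDerivAt_sinh y
    have := h1.sub h2
    rw [show 1 * Real.cosh y + y * Real.sinh y - Real.cosh y = y * Real.sinh y by ring] at this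
    exact this
  have hmono : MonotoneOn f (Set.Ici (0 : ℝ)) := by
    apply monotoneOn_of_deriv_nonneg (convex_Ici 0)
    · exact fun y _ => ((hd y).differentiableAt).continuousAt.continuousWithinAt
    · intro y hy
      exact ((hd y).differentiableAt).differentiableWithinAt
    · intro y hy
      rw [interior_Ici] at hy
      rw [(hd y).deriv]
      exact mul_nonneg (le_of_lt hy) (Real.sinh_nonneg_iff.2 (le_of_lt hy))
  have h0 : f 0 ≤ f x := hmono (Set.self_mem_Ici) hx hx
  simp only [hf, Real.sinh_zero, Real.cosh_zero, mul_one, zero_mul, sub_zero] at h0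
  linarith

lemma tanh_le_self' {x : ℝ} (hx : 0 ≤ x) : Real.tanh x ≤ x := by
  rw [Real.tanh_eq_sinh_div_cosh]
  exact (div_le_iff₀ (Real.cosh_pos x)).2 (sinh_le_mul_cosh hx)

lemma sqrt_add_le' {a b : ℝ} (ha : 0 ≤ a) (hb : 0 ≤ b) :
    Real.sqrt (a + b) ≤ Real.sqrt a + Real.sqrt b := by
  have h : a + b ≤ (Real.sqrt a + Real.sqrt b) ^ 2 := by
    nlinarith [Real.sq_sqrt ha, Real.sq_sqrt hb, Real.sqrt_nonneg a, Real.sqrt_nonneg b]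
  calc Real.sqrt (a + b) ≤ Real.sqrt ((Real.sqrt a + Real.sqrt b) ^ 2) :=
        Real.sqrt_le_sqrt h
    _ = Real.sqrt a + Real.sqrt b := Real.sqrt_sq (by positivity)

theorem sqrt_Kmu_weight_bound (s : ℝ) :
    ∃ C > 0, ∀ μ : ℝ, 0 < μ → μ ≤ 1 → ∀ β : ℝ, 0 ≤ β → ∀ ξ : ℝ,
      Real.sqrt (Kmu β μ ξ) * (1 + ξ ^ 2) ^ ((s - 1)/2) * |ξ| ≤
        C * ((1 + Real.sqrt β + β) * (1 + ξ ^ 2) ^ (s/2)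
          + Real.sqrt β * μ ^ ((1:ℝ)/4) * (1 + ξ ^ 2) ^ (s/2) * |ξ| ^ ((1:ℝ)/2)) := by
  refine ⟨1, one_pos, fun μ hμ hμ1 β hβ ξ => ?_⟩
  have hμ0 : (0:ℝ) ≤ μ := hμ.le
  -- bound on Kmu
  have hK : Kmu β μ ξ ≤ 1 + β * (Real.sqrt μ * |ξ|) := by
    rcases eq_or_ne ξ 0 with h0 | h0
    · simp [Kmu, Tmu, h0]
    · have hx : 0 < Real.sqrt μ * |ξ| :=
        mul_pos (Real.sqrt_pos.2 hμ) (abs_pos.2 h0)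
      set x := Real.sqrt μ * |ξ| with hxdef
      have hT : Tmu μ ξ = Real.tanh x / x := by simp [Tmu, h0]; rfl
      have hTle : Tmu μ ξ ≤ 1 := by
        rw [hT]
        exact (div_le_one hx).2 (tanh_le_self' hx.le)
      have hx2 : x ^ 2 = μ * ξ ^ 2 := by
        rw [hxdef, mul_pow, Real.sq_sqrt hμ0, sq_abs]
      have hT2 : Tmu μ ξ * (β * μ * ξ ^ 2) = β * (Real.tanh x * x) := by
        have hx2' : β * μ * ξ ^ 2 = β * x ^ 2 := by rw [hx2]; ring
        rw [hT, hx2']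
        field_simp
      have hKeq : Kmu β μ ξ = Tmu μ ξ + Tmu μ ξ * (β * μ * ξ ^ 2) := by
        rw [Kmu]; ring
      rw [hKeq, hT2]
      have : Real.tanh x * x ≤ x := by
        have := tanh_le_one' x
        nlinarith
      have : β * (Real.tanh x * x) ≤ β * x := by
        exact mul_le_mul_of_nonneg_left this hβ
      linarith
  have hKnn : 0 ≤ Kmu β μ ξ := by
    have hT : 0 ≤ Tmu μ ξ := by
      rcases eq_or_ne ξ 0 with h0 | h0
      · simp [Tmu, h0]
      · have hx : 0 < Real.sqrt μ * |ξ| :=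
          mul_pos (Real.sqrt_pos.2 hμ) (abs_pos.2 h0)
        simp only [Tmu, h0, if_false]
        exact div_nonneg (tanh_nonneg' hx.le) hx.le
    have : (0:ℝ) ≤ 1 + β * μ * ξ ^ 2 := by positivity
    exact mul_nonneg hT this
  -- bound on sqrt Kmu
  have hsq : Real.sqrt (Kmu β μ ξ) ≤
      1 + Real.sqrt β * μ ^ ((1:ℝ)/4) * |ξ| ^ ((1:ℝ)/2) := by
    have h1 : Real.sqrt (Kmu β μ ξ) ≤ Real.sqrt (1 + β * (Real.sqrt μ * |ξ|)) :=
      Real.sqrt_le_sqrt hK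
    have h2 : Real.sqrt (1 + β * (Real.sqrt μ * |ξ|)) ≤
        Real.sqrt 1 + Real.sqrt (β * (Real.sqrt μ * |ξ|)) :=
      sqrt_add_le' one_pos.le (by positivity)
    have h3 : Real.sqrt (β * (Real.sqrt μ * |ξ|)) =
        Real.sqrt β * μ ^ ((1:ℝ)/4) * |ξ| ^ ((1:ℝ)/2) := by
      rw [Real.sqrt_mul hβ, Real.sqrt_mul (Real.sqrt_nonneg μ)]
      rw [Real.sqrt_eq_rpow (Real.sqrt μ), Real.sqrt_eq_rpow |ξ|,
        Real.sqrt_eq_rpow μ, ← Real.rpow_mul hμ0]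
      norm_num
      ring
    rw [Real.sqrt_one] at h2
    rw [h3] at h2
    linarith
  -- weight bound
  have hw : (1 + ξ ^ 2) ^ ((s - 1)/2) * |ξ| ≤ (1 + ξ ^ 2) ^ (s/2) := by
    have hb : (0:ℝ) < 1 + ξ ^ 2 := by positivity
    have habs : |ξ| ≤ (1 + ξ ^ 2) ^ ((1:ℝ)/2) := by
      rw [← Real.sqrt_eq_rpow, ← Real.sqrt_sq_eq_abs]
      exact Real.sqrt_le_sqrt (by nlinarith)
    calc (1 + ξ ^ 2) ^ ((s - 1)/2) * |ξ|
        ≤ (1 + ξ ^ 2) ^ ((s - 1)/2) * (1 + ξ ^ 2) ^ ((1:ℝ)/2) :=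
          mul_le_mul_of_nonneg_left habs (Real.rpow_nonneg hb.le _)
      _ = (1 + ξ ^ 2) ^ (s/2) := by
          rw [← Real.rpow_add hb]; ring_nf
  have hwnn : 0 ≤ (1 + ξ ^ 2) ^ ((s - 1)/2) * |ξ| :=
    mul_nonneg (Real.rpow_nonneg (by positivity) _) (abs_nonneg ξ)
  have hsnn : 0 ≤ (1 + ξ ^ 2) ^ (s/2) := Real.rpow_nonneg (by positivity) _
  have hsqnn : 0 ≤ Real.sqrt (Kmu β μ ξ) := Real.sqrt_nonneg _
  have key : Real.sqrt (Kmu β μ ξ) * ((1 + ξ ^ 2) ^ ((s - 1)/2) * |ξ|) ≤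
      (1 + Real.sqrt β * μ ^ ((1:ℝ)/4) * |ξ| ^ ((1:ℝ)/2)) * (1 + ξ ^ 2) ^ (s/2) := by
    apply mul_le_mul hsq hw hwnn
    positivity
  have hβ1 : (1:ℝ) ≤ 1 + Real.sqrt β + β := by
    have : 0 ≤ Real.sqrt β := Real.sqrt_nonneg β
    linarith
  have hfinal : (1 + Real.sqrt β * μ ^ ((1:ℝ)/4) * |ξ| ^ ((1:ℝ)/2)) * (1 + ξ ^ 2) ^ (s/2) ≤
      (1 + Real.sqrt β + β) * (1 + ξ ^ 2) ^ (s/2)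
        + Real.sqrt β * μ ^ ((1:ℝ)/4) * (1 + ξ ^ 2) ^ (s/2) * |ξ| ^ ((1:ℝ)/2) := by
    have h1 : (1:ℝ) * (1 + ξ ^ 2) ^ (s/2) ≤ (1 + Real.sqrt β + β) * (1 + ξ ^ 2) ^ (s/2) :=
      mul_le_mul_of_nonneg_right hβ1 hsnn
    nlinarith [h1]
  calc Real.sqrt (Kmu β μ ξ) * (1 + ξ ^ 2) ^ ((s - 1)/2) * |ξ|
      = Real.sqrt (Kmu β μ ξ) * ((1 + ξ ^ 2) ^ ((s - 1)/2) * |ξ|) := by ring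
    _ ≤ (1 + Real.sqrt β * μ ^ ((1:ℝ)/4) * |ξ| ^ ((1:ℝ)/2)) * (1 + ξ ^ 2) ^ (s/2) := key
    _ ≤ (1 + Real.sqrt β + β) * (1 + ξ ^ 2) ^ (s/2)
        + Real.sqrt β * μ ^ ((1:ℝ)/4) * (1 + ξ ^ 2) ^ (s/2) * |ξ| ^ ((1:ℝ)/2) := hfinal
    _ = 1 * ((1 + Real.sqrt β + β) * (1 + ξ ^ 2) ^ (s/2)
        + Real.sqrt β * μ ^ ((1:ℝ)/4) * (1 + ξ ^ 2) ^ (s/2) * |ξ| ^ ((1:ℝ)/2)) := by ring
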